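/- arXiv:2309.06894 — 2 statements merged into one kernel-verified Lean document; each statement's English description precedes it below -/
import Mathlib

section
/- Let u be a unit timelike vector: u^a with Σ_{a,b} η_{ab} u^a u^b = -1, and u_a = Σ_b η_{ab} u^b. Define the spatial volume form ε_{bcd} = Σ_a ε_{abcd} u^a. Then for all a,b,c,d: ε_{abcd} = -(u_a ε_{bcd} - u_b ε_{acd}) + (ε_{abc} u_d - ε_{abd} u_c), i.e. the four-volume decomposes as ε_{abcd} = -2(u_{[a}ε_{b]cd} - ε_{ab[c}u_{d]}). -/
open Finset

/-- Minkowski metric η_{ab} = diag(-1,1,1,1). -/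
def gMetric (a b : Fin 4) : ℝ :=
  if a = b then (if a = 0 then -1 else 1) else 0

/-- Levi-Civita symbol ε_{abcd} with ε_{0123} = 1. -/
def eps4 (a b c d : Fin 4) : ℝ :=
  (Int.sign (((b : ℤ) - (a : ℤ)) * ((c : ℤ) - (a : ℤ)) * ((d : ℤ) - (a : ℤ)) *
      ((c : ℤ) - (b : ℤ)) * ((d : ℤ) - (b : ℤ)) * ((d : ℤ) - (c : ℤ))) : ℝ)

/-- Lowered index version u_a = η_{ab} u^b of a vector u^a. -/
def uLow (u : Fin 4 → ℝ) (a : Fin 4) : ℝ := ∑ b : Fin 4, gMetric a b * u b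

/-- Spatial volume form ε_{bcd} = ε_{abcd} u^a. -/
def epsSp (u : Fin 4 → ℝ) (b c d : Fin 4) : ℝ := ∑ a : Fin 4, eps4 a b c d * u a


set_option maxHeartbeats 2000000 in
private lemma stmt3_c0 : ((0 : Fin 4) : ℤ) = 0 := by decide
private lemma stmt3_c1 : ((1 : Fin 4) : ℤ) = 1 := by decide
private lemma stmt3_c2 : ((2 : Fin 4) : ℤ) = 2 := by decide
private lemma stmt3_c3 : ((3 : Fin 4) : ℤ) = 3 := by decide
private lemma stmt3_sgnP {n : ℤ} (h : 0 < n) : ((Int.sign n : ℤ) : ℝ) = 1 := by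
  rw [Int.sign_eq_one_of_pos h]; norm_num
private lemma stmt3_sgnN {n : ℤ} (h : n < 0) : ((Int.sign n : ℤ) : ℝ) = -1 := by
  rw [Int.sign_eq_neg_one_of_neg h]; norm_num
private lemma stmt3_sgnZ : ((Int.sign 0 : ℤ) : ℝ) = 0 := by norm_num
private lemma stmt3_uLow0 (u : Fin 4 → ℝ) : uLow u 0 = -u 0 := by
  simp [uLow, gMetric, Fin.sum_univ_four]
private lemma stmt3_uLow1 (u : Fin 4 → ℝ) : uLow u 1 = u 1 := by
  simp [uLow, gMetric, Fin.sum_univ_four]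
private lemma stmt3_uLow2 (u : Fin 4 → ℝ) : uLow u 2 = u 2 := by
  simp [uLow, gMetric, Fin.sum_univ_four]
private lemma stmt3_uLow3 (u : Fin 4 → ℝ) : uLow u 3 = u 3 := by
  simp [uLow, gMetric, Fin.sum_univ_four]

set_option maxHeartbeats 4000000 in
/-- Decomposition of the four volume relative to a unit timelike vector `u`:
`ε_{abcd} = -2(u_{[a} ε_{b]cd} - ε_{ab[c} u_{d]})`. -/
theorem stmt_3 (u : Fin 4 → ℝ)
    (hu : ∑ a : Fin 4, ∑ b : Fin 4, gMetric a b * u a * u b = -1) :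
    ∀ a b c d, eps4 a b c d =
      -(uLow u a * epsSp u b c d - uLow u b * epsSp u a c d)
        + (epsSp u a b c * uLow u d - epsSp u a b d * uLow u c) := by
  have h : -(u 0 * u 0) + u 1 * u 1 + u 2 * u 2 + u 3 * u 3 = -1 := by
    have := hu
    simp [gMetric, Fin.sum_univ_four] at this
    linarith
  intro a b c d
  fin_cases a <;> fin_cases b <;> fin_cases c <;> fin_cases d <;>
    simp only [Fin.reduceFinMk, Fin.isValue, epsSp, Fin.sum_univ_four, stmt3_uLow0, stmt3_uLow1, stmt3_uLow2, stmt3_uLow3] <;>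
    norm_num [eps4, stmt3_c0, stmt3_c1, stmt3_c2, stmt3_c3, stmt3_sgnP, stmt3_sgnN, stmt3_sgnZ] <;>
    first
      | ring1
      | linear_combination h
      | linear_combination -h
end

section
/- (Faraday tensor from the Z-tensor.) Suppose Z_{abc} is in decomposed form with respect to u with fields (P, Q, Ψ, Φ), and define F_{bc} = Σ_a u^a Z_{abc}. Then F_{bc} = u_c P_b - u_b P_c + Σ_d ε_{bcd} Q^d for all b,c, where Q^d = Σ_e η^{de} Q_e; in particular F is antisymmetric and has the form of a Faraday tensor with electric part determined by P and magnetic part determined by Q. -/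
open Finset

/-- Inverse Minkowski metric η^{ab} = diag(-1,1,1,1). -/
def gInv (a b : Fin 4) : ℝ :=
  if a = b then (if a = 0 then -1 else 1) else 0

/-- Spatial volume form with the last index raised: ε_{bc}{}^{d} = ε_{bce} η^{ed}. -/
def epsSpUpLast (u : Fin 4 → ℝ) (b c d : Fin 4) : ℝ :=
  ∑ e : Fin 4, epsSp u b c e * gInv e d

/-- Spatial volume form with the first index raised: ε^{d}{}_{bc} = η^{de} ε_{ebc}. -/
def epsSpUpFirst (u : Fin 4 → ℝ) (d b c : Fin 4) : ℝ :=
  ∑ e : Fin 4, gInv d e * epsSp u e b c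

/-- `Z` is in decomposed form with respect to `u` with fields `(P, Q, Ψ, Φ)`:
`P`, `Q` are spatial vectors; `Ψ`, `Φ` are symmetric spatial rank-2 tensors; and
`Z_{abc} = -2η_{a[b} P_{c]} + ε_{bc}{}^{d} Φ_{ad} + 2u_{[b} Ψ_{c]a}
           - ε^{d}{}_{bc} u_a Q_d + 2ε^{d}{}_{a[c} u_{b]} Q_d`. -/
def IsDecomposed (Z : Fin 4 → Fin 4 → Fin 4 → ℝ) (u : Fin 4 → ℝ)
    (P Q : Fin 4 → ℝ) (Ψ Φ : Fin 4 → Fin 4 → ℝ) : Prop :=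
  (∑ a : Fin 4, P a * u a = 0) ∧ (∑ a : Fin 4, Q a * u a = 0) ∧
  (∀ a b, Ψ a b = Ψ b a) ∧ (∀ a b, Φ a b = Φ b a) ∧
  (∀ a, ∑ b : Fin 4, Ψ a b * u b = 0) ∧ (∀ a, ∑ b : Fin 4, Φ a b * u b = 0) ∧
  (∀ a b c, Z a b c =
    -(gMetric a b * P c - gMetric a c * P b)
    + (∑ d : Fin 4, epsSpUpLast u b c d * Φ a d)
    + (uLow u b * Ψ c a - uLow u c * Ψ b a)
    - (∑ d : Fin 4, epsSpUpFirst u d b c * uLow u a * Q d)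
    + (∑ d : Fin 4, (epsSpUpFirst u d a c * uLow u b - epsSpUpFirst u d a b * uLow u c) * Q d))

lemma gMetric_symm (a b : Fin 4) : gMetric a b = gMetric b a := by
  rcases eq_or_ne a b with h | h
  · subst h; rfl
  · simp [gMetric, h, h.symm]

lemma gInv_symm (a b : Fin 4) : gInv a b = gInv b a := by
  rcases eq_or_ne a b with h | h
  · subst h; rfl
  · simp [gInv, h, h.symm]

lemma eps4_swap13 (a b c d : Fin 4) : eps4 a b c d = - eps4 c b a d := by
  have h : ∀ a b c d : Fin 4,
      (Int.sign (((b : ℤ) - (a : ℤ)) * ((c : ℤ) - (a : ℤ)) * ((d : ℤ) - (a : ℤ)) *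
        ((c : ℤ) - (b : ℤ)) * ((d : ℤ) - (b : ℤ)) * ((d : ℤ) - (c : ℤ)))) =
      - (Int.sign (((b : ℤ) - (c : ℤ)) * ((a : ℤ) - (c : ℤ)) * ((d : ℤ) - (c : ℤ)) *
        ((a : ℤ) - (b : ℤ)) * ((d : ℤ) - (b : ℤ)) * ((d : ℤ) - (a : ℤ)))) := by decide
  unfold eps4
  exact_mod_cast h a b c d

lemma eps4_swap23 (a b c d : Fin 4) : eps4 a b c d = - eps4 a c b d := by
  have h : ∀ a b c d : Fin 4,
      (Int.sign (((b : ℤ) - (a : ℤ)) * ((c : ℤ) - (a : ℤ)) * ((d : ℤ) - (a : ℤ)) *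
        ((c : ℤ) - (b : ℤ)) * ((d : ℤ) - (b : ℤ)) * ((d : ℤ) - (c : ℤ)))) =
      - (Int.sign (((c : ℤ) - (a : ℤ)) * ((b : ℤ) - (a : ℤ)) * ((d : ℤ) - (a : ℤ)) *
        ((b : ℤ) - (c : ℤ)) * ((d : ℤ) - (c : ℤ)) * ((d : ℤ) - (b : ℤ)))) := by decide
  unfold eps4
  exact_mod_cast h a b c d

lemma eps4_cyc (a b c d : Fin 4) : eps4 a b c d = eps4 a c d b := by
  have h : ∀ a b c d : Fin 4,
      (Int.sign (((b : ℤ) - (a : ℤ)) * ((c : ℤ) - (a : ℤ)) * ((d : ℤ) - (a : ℤ)) *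
        ((c : ℤ) - (b : ℤ)) * ((d : ℤ) - (b : ℤ)) * ((d : ℤ) - (c : ℤ)))) =
      (Int.sign (((c : ℤ) - (a : ℤ)) * ((d : ℤ) - (a : ℤ)) * ((b : ℤ) - (a : ℤ)) *
        ((d : ℤ) - (c : ℤ)) * ((b : ℤ) - (c : ℤ)) * ((b : ℤ) - (d : ℤ)))) := by decide
  unfold eps4
  exact_mod_cast h a b c d

lemma epsSp_cyc (u : Fin 4 → ℝ) (b c d : Fin 4) : epsSp u b c d = epsSp u c d b := by
  unfold epsSp
  exact Finset.sum_congr rfl (fun a _ => by rw [eps4_cyc])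

lemma epsSp_swap12 (u : Fin 4 → ℝ) (b c d : Fin 4) : epsSp u b c d = - epsSp u c b d := by
  unfold epsSp
  rw [← Finset.sum_neg_distrib]
  exact Finset.sum_congr rfl (fun a _ => by rw [eps4_swap23]; ring)

lemma sum_antisymm_zero (g : Fin 4 → Fin 4 → ℝ) (h : ∀ i j, g i j = - g j i) :
    (∑ i : Fin 4, ∑ j : Fin 4, g i j) = 0 := by
  have h2 : (∑ i : Fin 4, ∑ j : Fin 4, g i j) = ∑ i : Fin 4, ∑ j : Fin 4, g j i :=
    Finset.sum_comm
  have h3 : (∑ i : Fin 4, ∑ j : Fin 4, g i j) + (∑ i : Fin 4, ∑ j : Fin 4, g j i) = 0 := by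
    rw [← Finset.sum_add_distrib]
    apply Finset.sum_eq_zero
    intro i _
    rw [← Finset.sum_add_distrib]
    apply Finset.sum_eq_zero
    intro j _
    rw [h i j]
    ring
  linarith [h2, h3]

/-- (Faraday tensor from the Z-tensor.) For a Z-tensor in decomposed form, the tensor
`F_{bc} = u^a Z_{abc}` satisfies `F_{bc} = u_c P_b - u_b P_c + ε_{bcd} Q^d`; in particular
`F` is antisymmetric, with electric part `P` and magnetic part `Q`. -/
theorem stmt_8 (Z : Fin 4 → Fin 4 → Fin 4 → ℝ) (u : Fin 4 → ℝ)
    (hu : ∑ a : Fin 4, ∑ b : Fin 4, gMetric a b * u a * u b = -1)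
    (P Q : Fin 4 → ℝ) (Ψ Φ : Fin 4 → Fin 4 → ℝ)
    (hdec : IsDecomposed Z u P Q Ψ Φ)
    (F : Fin 4 → Fin 4 → ℝ)
    (hF : ∀ b c, F b c = ∑ a : Fin 4, u a * Z a b c) :
    (∀ b c, F b c = uLow u c * P b - uLow u b * P c
        + ∑ d : Fin 4, epsSp u b c d * (∑ e : Fin 4, gInv d e * Q e)) ∧
    (∀ b c, F b c = - F c b) := by
  obtain ⟨hP, hQ, hΨs, hΦs, hΨu, hΦu, hZ⟩ := hdec
  -- normalization of u
  have hnorm : (∑ a : Fin 4, u a * uLow u a) = -1 := by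
    rw [← hu]
    exact Finset.sum_congr rfl (fun a _ => by
      unfold uLow
      rw [Finset.mul_sum]
      exact Finset.sum_congr rfl (fun b _ => by ring))
  have hΦu' : ∀ d, (∑ a : Fin 4, u a * Φ a d) = 0 := fun d => by
    rw [← hΦu d]
    exact Finset.sum_congr rfl (fun a _ => by rw [hΦs a d]; ring)
  have hΨu' : ∀ d, (∑ a : Fin 4, u a * Ψ d a) = 0 := fun d => by
    rw [← hΨu d]
    exact Finset.sum_congr rfl (fun a _ => by ring)
  -- u^a ε^d_{ac} = 0
  have hEu : ∀ d c, (∑ a : Fin 4, u a * epsSpUpFirst u d a c) = 0 := by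
    intro d c
    unfold epsSpUpFirst
    simp_rw [Finset.mul_sum]
    rw [Finset.sum_comm]
    apply Finset.sum_eq_zero
    intro e _
    have : (∑ a : Fin 4, u a * (gInv d e * epsSp u e a c))
        = gInv d e * ∑ a : Fin 4, u a * epsSp u e a c := by
      rw [Finset.mul_sum]
      exact Finset.sum_congr rfl (fun a _ => by ring)
    rw [this]
    have hz : (∑ a : Fin 4, u a * epsSp u e a c) = 0 := by
      unfold epsSp
      simp_rw [Finset.mul_sum]
      apply sum_antisymm_zero (fun a f => u a * (eps4 f e a c * u f))
      intro a f
      rw [eps4_swap13 f e a c]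
      ring
    rw [hz, mul_zero]
  -- main computation
  have key : ∀ b c, F b c = uLow u c * P b - uLow u b * P c
      + ∑ d : Fin 4, epsSpUpFirst u d b c * Q d := by
    intro b c
    rw [hF]
    have step : (∑ a : Fin 4, u a * Z a b c)
        = (∑ a : Fin 4, u a * -(gMetric a b * P c - gMetric a c * P b))
        + (∑ a : Fin 4, u a * ∑ d : Fin 4, epsSpUpLast u b c d * Φ a d)
        + (∑ a : Fin 4, u a * (uLow u b * Ψ c a - uLow u c * Ψ b a))
        - (∑ a : Fin 4, u a * ∑ d : Fin 4, epsSpUpFirst u d b c * uLow u a * Q d)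
        + (∑ a : Fin 4, u a *
            ∑ d : Fin 4, (epsSpUpFirst u d a c * uLow u b - epsSpUpFirst u d a b * uLow u c) * Q d) := by
      rw [← Finset.sum_add_distrib, ← Finset.sum_add_distrib, ← Finset.sum_sub_distrib,
        ← Finset.sum_add_distrib]
      exact Finset.sum_congr rfl (fun a _ => by rw [hZ]; ring)
    rw [step]
    have e1 : (∑ a : Fin 4, u a * -(gMetric a b * P c - gMetric a c * P b))
        = uLow u c * P b - uLow u b * P c := by
      unfold uLow
      rw [Finset.sum_mul, Finset.sum_mul, ← Finset.sum_sub_distrib]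
      exact Finset.sum_congr rfl (fun a _ => by rw [gMetric_symm c a, gMetric_symm b a]; ring)
    have e2 : (∑ a : Fin 4, u a * ∑ d : Fin 4, epsSpUpLast u b c d * Φ a d) = 0 := by
      simp_rw [Finset.mul_sum]
      rw [Finset.sum_comm]
      apply Finset.sum_eq_zero
      intro d _
      have : (∑ a : Fin 4, u a * (epsSpUpLast u b c d * Φ a d))
          = epsSpUpLast u b c d * ∑ a : Fin 4, u a * Φ a d := by
        rw [Finset.mul_sum]
        exact Finset.sum_congr rfl (fun a _ => by ring)
      rw [this, hΦu' d, mul_zero]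
    have e3 : (∑ a : Fin 4, u a * (uLow u b * Ψ c a - uLow u c * Ψ b a)) = 0 := by
      have : (∑ a : Fin 4, u a * (uLow u b * Ψ c a - uLow u c * Ψ b a))
          = uLow u b * (∑ a : Fin 4, u a * Ψ c a) - uLow u c * (∑ a : Fin 4, u a * Ψ b a) := by
        rw [Finset.mul_sum, Finset.mul_sum, ← Finset.sum_sub_distrib]
        exact Finset.sum_congr rfl (fun a _ => by ring)
      rw [this, hΨu' c, hΨu' b, mul_zero, mul_zero, sub_zero]
    have e4 : (∑ a : Fin 4, u a * ∑ d : Fin 4, epsSpUpFirst u d b c * uLow u a * Q d)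
        = - ∑ d : Fin 4, epsSpUpFirst u d b c * Q d := by
      simp_rw [Finset.mul_sum]
      rw [Finset.sum_comm, ← Finset.sum_neg_distrib]
      apply Finset.sum_congr rfl
      intro d _
      have : (∑ a : Fin 4, u a * (epsSpUpFirst u d b c * uLow u a * Q d))
          = (epsSpUpFirst u d b c * Q d) * ∑ a : Fin 4, u a * uLow u a := by
        rw [Finset.mul_sum]
        exact Finset.sum_congr rfl (fun a _ => by ring)
      rw [this, hnorm]
      ring
    have e5 : (∑ a : Fin 4, u a *
        ∑ d : Fin 4, (epsSpUpFirst u d a c * uLow u b - epsSpUpFirst u d a b * uLow u c) * Q d)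
        = 0 := by
      simp_rw [Finset.mul_sum]
      rw [Finset.sum_comm]
      apply Finset.sum_eq_zero
      intro d _
      have : (∑ a : Fin 4, u a *
          ((epsSpUpFirst u d a c * uLow u b - epsSpUpFirst u d a b * uLow u c) * Q d))
          = (uLow u b * Q d) * (∑ a : Fin 4, u a * epsSpUpFirst u d a c)
            - (uLow u c * Q d) * (∑ a : Fin 4, u a * epsSpUpFirst u d a b) := by
        rw [Finset.mul_sum, Finset.mul_sum, ← Finset.sum_sub_distrib]
        exact Finset.sum_congr rfl (fun a _ => by ring)
      rw [this, hEu d c, hEu d b]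
      ring
    rw [e1, e2, e3, e4, e5]
    ring
  -- rewrite ε^d_{bc} Q_d as ε_{bcd} Q^d
  have keps : ∀ b c, (∑ d : Fin 4, epsSpUpFirst u d b c * Q d)
      = ∑ d : Fin 4, epsSp u b c d * (∑ e : Fin 4, gInv d e * Q e) := by
    intro b c
    unfold epsSpUpFirst
    simp_rw [Finset.sum_mul, Finset.mul_sum]
    rw [Finset.sum_comm]
    apply Finset.sum_congr rfl
    intro e _
    apply Finset.sum_congr rfl
    intro d _
    rw [epsSp_cyc u e b c, gInv_symm d e]
    ring
  have main : ∀ b c, F b c = uLow u c * P b - uLow u b * P c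
      + ∑ d : Fin 4, epsSp u b c d * (∑ e : Fin 4, gInv d e * Q e) := by
    intro b c
    rw [key b c, keps b c]
  refine ⟨main, fun b c => ?_⟩
  rw [main b c, main c b]
  have hsw : (∑ d : Fin 4, epsSp u b c d * (∑ e : Fin 4, gInv d e * Q e))
      = - ∑ d : Fin 4, epsSp u c b d * (∑ e : Fin 4, gInv d e * Q e) := by
    rw [← Finset.sum_neg_distrib]
    exact Finset.sum_congr rfl (fun d _ => by rw [epsSp_swap12 u b c d]; ring)
  rw [hsw]
  ring
end
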